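/- In Λ(2l), with α_p := y₂^p x₁ − 2p y₁x₂y₂^{p−1} and β_p := y₁y₂^p, the triple Massey product ⟨α_{p₁}, α_{p₂}, β_{p₃}⟩ contains (1/(2(p₂+p₃+1)))·α_{p₁+p₂+p₃+1}; concretely: α_{p₁}α_{p₂} = d(x₂y₂^{p₁+p₂}), α_{p₂}β_{p₃} = d(−y₂^{p₂+p₃+1}/(2(p₂+p₃+1))), and the resulting combination (−1)^{|α_{p₂}|}[x₂y₂^{p₁+p₂}·β_{p₃} − (−1)^{|α_{p₁}|}α_{p₁}·(−y₂^{p₂+p₃+1}/(2(p₂+p₃+1)))] is closed and cohomologous to (1/(2(p₂+p₃+1)))α_{p₁+p₂+p₃+1}. -/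
import Mathlib


namespace LoopSphereModel

noncomputable section

/-- Basis of the Sullivan model `Λ(2l) = Λ(y₁,x₁,y₂,x₂)` of the free loop space
`LS^{2l}`: `(e, a, p, f)` codes the monomial `y₁^e · x₁^a · y₂^p · x₂^f`
(`e, f ∈ {0,1}` since `y₁, x₂` are odd; `x₁, y₂` are even). -/
abbrev Bas : Type := Bool × ℕ × ℕ × Bool

/-- The underlying ℚ-vector space of `Λ(2l)`. -/
abbrev Mod : Type := Bas →₀ ℚ

/-- The basis monomial `y₁^e x₁^a y₂^p x₂^f`. -/
def mon (b : Bas) : Mod := Finsupp.single b 1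

/-- Degree of a basis monomial: `|y₁| = 2l-1`, `|x₁| = 2l`, `|y₂| = 4l-2`,
`|x₂| = 4l-1`. -/
def mdeg (l : ℕ) (b : Bas) : ℕ :=
  (if b.1 then 2 * l - 1 else 0) + b.2.1 * (2 * l) + b.2.2.1 * (4 * l - 2) +
    (if b.2.2.2 then 4 * l - 1 else 0)

/-- The differential on basis monomials, obtained by extending
`dy₁ = dx₁ = 0`, `dx₂ = x₁²`, `dy₂ = -2x₁y₁` as a degree `+1` derivation:
`d(y₁^e x₁^a y₂^p x₂^f) = (-2p)·y₁ x₁^{a+1} y₂^{p-1} x₂^f` (only when `e = 0`)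
`+ (-1)^e · y₁^e x₁^{a+2} y₂^p` (only when `f = 1`). -/
def dmon (b : Bas) : Mod :=
  (if b.1 then 0
    else (-(2 * (b.2.2.1 : ℚ))) • mon (true, b.2.1 + 1, b.2.2.1 - 1, b.2.2.2)) +
  (if b.2.2.2 then
      (if b.1 then (-1 : ℚ) else 1) • mon (b.1, b.2.1 + 2, b.2.2.1, false)
    else 0)

/-- The differential of `Λ(2l)` as a linear map. -/
def dL : Mod →ₗ[ℚ] Mod :=
  Finsupp.lsum ℚ fun b => LinearMap.toSpanSingleton ℚ Mod (dmon b)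

/-- Product of two basis monomials in the free graded-commutative algebra:
zero if an odd generator repeats, otherwise the reordered monomial with the
Koszul sign `(-1)^{e'·f}` (moving `y₁'` past `x₂^f`). -/
def monMul (b b' : Bas) : Mod :=
  if b.1 && b'.1 then 0
  else if b.2.2.2 && b'.2.2.2 then 0
  else (if b'.1 && b.2.2.2 then (-1 : ℚ) else 1) •
    mon (b.1 || b'.1, b.2.1 + b'.2.1, b.2.2.1 + b'.2.2.1, b.2.2.2 || b'.2.2.2)

/-- The (graded-commutative) multiplication of `Λ(2l)`, extended bilinearly. -/
def mulF (x y : Mod) : Mod :=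
  x.sum fun b c => y.sum fun b' c' => (c * c') • monMul b b'

/-- The cocycle `α_p := y₂^p x₁ - 2p · y₁ x₂ y₂^{p-1}`
(in canonical order `x₁ y₂^p - 2p · y₁ y₂^{p-1} x₂`). -/
def alphaEl (p : ℕ) : Mod :=
  mon (false, 1, p, false) - (2 * (p : ℚ)) • mon (true, 0, p - 1, true)

/-- The cocycle `β_p := y₁ y₂^p`. -/
def betaEl (p : ℕ) : Mod := mon (true, 0, p, false)

lemma mulF_mon_mon (b b' : Bas) : mulF (mon b) (mon b') = monMul b b' := by
  unfold mulF mon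
  rw [Finsupp.sum_single_index, Finsupp.sum_single_index] <;> simp

lemma mulF_add_left (x y z : Mod) : mulF (x + y) z = mulF x z + mulF y z := by
  unfold mulF
  apply Finsupp.sum_add_index <;> intros <;>
    simp [add_mul, add_smul, Finsupp.sum_add]

lemma mulF_add_right (x y z : Mod) : mulF x (y + z) = mulF x y + mulF x z := by
  unfold mulF
  rw [← Finsupp.sum_add]
  refine Finsupp.sum_congr fun b _ => ?_
  apply Finsupp.sum_add_index <;> intros <;> simp [mul_add, add_smul]

lemma mulF_smul_left (c : ℚ) (x y : Mod) : mulF (c • x) y = c • mulF x y := by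
  unfold mulF
  rw [Finsupp.sum_smul_index', Finsupp.smul_sum]
  · refine Finsupp.sum_congr fun b _ => ?_
    rw [Finsupp.smul_sum]
    refine Finsupp.sum_congr fun b' _ => ?_
    simp only [smul_eq_mul, smul_smul]
    congr 1; ring
  · intro b; simp

lemma mulF_smul_right (c : ℚ) (x y : Mod) : mulF x (c • y) = c • mulF x y := by
  unfold mulF
  rw [Finsupp.smul_sum]
  refine Finsupp.sum_congr fun b cb => ?_
  rw [Finsupp.sum_smul_index', Finsupp.smul_sum]
  · refine Finsupp.sum_congr fun b' _ => ?_
    simp only [smul_eq_mul, smul_smul]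
    congr 1; ring
  · intro b'; simp

lemma mulF_sub_left (x y z : Mod) : mulF (x - y) z = mulF x z - mulF y z := by
  have := mulF_add_left (x - y) y z
  rw [sub_add_cancel] at this
  rw [eq_sub_iff_add_eq, ← this]

lemma mulF_sub_right (x y z : Mod) : mulF x (y - z) = mulF x y - mulF x z := by
  have := mulF_add_right x (y - z) z
  rw [sub_add_cancel] at this
  rw [eq_sub_iff_add_eq, ← this]

lemma mulF_zero_right (x : Mod) : mulF x 0 = 0 := by
  unfold mulF; simp

lemma mulF_zero_left (y : Mod) : mulF 0 y = 0 := by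
  unfold mulF; simp

lemma mulF_neg_right (x y : Mod) : mulF x (-y) = -mulF x y := by
  have := mulF_sub_right x 0 y
  simpa [mulF_zero_right] using this

lemma mulF_neg_left (x y : Mod) : mulF (-x) y = -mulF x y := by
  have := mulF_sub_left 0 x y
  simpa [mulF_zero_left] using this

lemma dL_mon (b : Bas) : dL (mon b) = dmon b := by
  simp [dL, mon]

/-- The triple Massey product `⟨α_{p₁}, α_{p₂}, β_{p₃}⟩` in `Λ(2l)` contains
`(1/(2(p₂+p₃+1)))·α_{p₁+p₂+p₃+1}`.  Concretely: `α_{p₁}α_{p₂} = d(x₂y₂^{p₁+p₂})`,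
`α_{p₂}β_{p₃} = d(-y₂^{p₂+p₃+1}/(2(p₂+p₃+1)))`, and — since `|α_{p₂}|` and
`|α_{p₁}|` are even, so all signs are `+1` — the Massey representative
`S·β_{p₃} - α_{p₁}·T` is closed and cohomologous to
`(1/(2(p₂+p₃+1)))·α_{p₁+p₂+p₃+1}`. -/
theorem massey_alpha_alpha_beta : ∀ p₁ p₂ p₃ : ℕ,
    mulF (alphaEl p₁) (alphaEl p₂) = dL (mon (false, 0, p₁ + p₂, true)) ∧
    mulF (alphaEl p₂) (betaEl p₃) =
      dL ((-(1 / (2 * ((p₂ : ℚ) + p₃ + 1)))) •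
        mon (false, 0, p₂ + p₃ + 1, false)) ∧
    dL (mulF (mon (false, 0, p₁ + p₂, true)) (betaEl p₃) -
        mulF (alphaEl p₁)
          ((-(1 / (2 * ((p₂ : ℚ) + p₃ + 1)))) •
            mon (false, 0, p₂ + p₃ + 1, false))) = 0 ∧
    ∃ s,
      mulF (mon (false, 0, p₁ + p₂, true)) (betaEl p₃) -
          mulF (alphaEl p₁)
            ((-(1 / (2 * ((p₂ : ℚ) + p₃ + 1)))) •
              mon (false, 0, p₂ + p₃ + 1, false)) =
        (1 / (2 * ((p₂ : ℚ) + p₃ + 1))) • alphaEl (p₁ + p₂ + p₃ + 1) + dL s := by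
  intro p₁ p₂ p₃
  have h2 : (2 * ((p₂ : ℚ) + p₃ + 1)) ≠ 0 := by positivity
  refine ⟨?_, ?_, ?_, 0, ?_⟩
  · rcases p₁ with _ | p₁ <;> rcases p₂ with _ | p₂ <;>
      simp [alphaEl, betaEl, mulF_sub_left, mulF_sub_right, mulF_smul_left,
        mulF_smul_right, mulF_mon_mon, mulF_neg_left, mulF_neg_right, map_sub, map_smul,
        dL_mon, dmon, monMul, smul_sub, smul_smul, sub_smul] <;>
      ring_nf <;> match_scalars <;> push_cast <;> ring
  · rcases p₂ with _ | p₂ <;>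
      simp [alphaEl, betaEl, mulF_sub_left, mulF_sub_right, mulF_smul_left,
        mulF_smul_right, mulF_mon_mon, mulF_neg_left, mulF_neg_right, map_sub, map_smul,
        dL_mon, dmon, monMul, smul_sub, smul_smul, sub_smul] <;>
      ring_nf <;> match_scalars <;> push_cast <;> field_simp <;> ring
  · rcases p₁ with _ | p₁ <;>
      simp [alphaEl, betaEl, mulF_sub_left, mulF_sub_right, mulF_smul_left,
        mulF_smul_right, mulF_mon_mon, mulF_neg_left, mulF_neg_right, map_sub, map_smul,
        dL_mon, dmon, monMul, smul_sub, smul_smul, sub_smul] <;>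
      ring_nf <;> match_scalars <;> push_cast <;> field_simp <;> ring
  · rcases p₁ with _ | p₁ <;>
      simp [alphaEl, betaEl, mulF_sub_left, mulF_sub_right, mulF_smul_left,
        mulF_smul_right, mulF_mon_mon, mulF_neg_left, mulF_neg_right, map_sub, map_smul,
        dL_mon, dmon, monMul, map_zero, smul_sub, smul_smul, sub_smul] <;>
      ring_nf <;> match_scalars <;> push_cast <;> field_simp <;> ring

end

end LoopSphereModel
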